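/- arXiv:2105.13897 — 9 statements merged into one kernel-verified Lean document; each statement's English description precedes it below -/
import Mathlib

section
/- Every rational number p/q in reduced form with p odd and q even can be written as a continued fraction r = n_k - 1/(n_{k-1} - 1/(... - 1/n_1)) where k is even and all entries n_1,...,n_k are even integers. -/
/-!
If `p` and `q` have opposite parity and `q ≠ 0`, there is an even `n` with `|n q - p| < |q|`,
and `p / q = n - q / (n q - p)`, where the new pair `(q, n q - p)` again has opposite parity.
Iterating until the denominator vanishes (`p / 0 = 0` is the empty continued fraction) gives
even entries, and each step flips the parity of the denominator, so the number of entries has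
the parity of `q`.
-/

/-- Evaluation of the continued fraction `n_k - 1/(n_{k-1} - 1/(⋯ - 1/n_1))`,
where the list is `[n_k, n_{k-1}, …, n_1]` (outermost entry first). -/
def cfEval : List ℤ → ℚ
  | [] => 0
  | n :: l => (n : ℚ) - (cfEval l)⁻¹

lemma exists_even_mul_sub_natAbs_lt {p q : ℤ} (hq : q ≠ 0) (hpq : Odd (p + q)) :
    ∃ n : ℤ, Even n ∧ (n * q - p).natAbs < q.natAbs := by
  have h2q : 2 * q ≠ 0 := mul_ne_zero two_ne_zero hq
  obtain ⟨k, r, hdiv, hr0, hr⟩ : ∃ k r : ℤ, 2 * q * k + r = p + q.natAbs ∧ 0 ≤ r ∧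
      r < (2 * q).natAbs :=
    ⟨_, _, Int.mul_ediv_add_emod _ _, Int.emod_nonneg _ h2q, Int.emod_lt _ h2q⟩
  -- `2 k q - p = |q| - r ∈ (-|q|, |q|]`, and `r = 0` would make `p + q` even.
  refine ⟨2 * k, even_two_mul k, ?_⟩
  rw [Int.odd_iff] at hpq
  rw [mul_assoc] at hdiv
  rw [mul_right_comm, mul_assoc]
  generalize q * k = m at hdiv ⊢
  omega

theorem exists_even_cfEval_eq_div (p q : ℤ) (hpq : Odd (p + q)) :
    ∃ l : List ℤ, (Even l.length ↔ Even q) ∧ (∀ n ∈ l, Even n) ∧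
      cfEval l = (p : ℚ) / q := by
  rcases eq_or_ne q 0 with rfl | hq
  · exact ⟨[], by simp, by simp, by simp [cfEval]⟩
  obtain ⟨n, hn, hlt⟩ := exists_even_mul_sub_natAbs_lt hq hpq
  have hstep : Odd (q + (n * q - p)) := by
    have : q + (n * q - p) = (p + q) + (n * q - 2 * p) := by ring
    exact this ▸ hpq.add_even ((hn.mul_right q).sub (even_two_mul p))
  obtain ⟨l, hlen, hl, hval⟩ := exists_even_cfEval_eq_div q (n * q - p) hstep
  refine ⟨n :: l, ?_, List.forall_mem_cons.2 ⟨hn, hl⟩, ?_⟩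
  · rw [List.length_cons, Nat.even_add_one, hlen, Int.not_even_iff_odd]
    exact Int.odd_add'.mp hstep
  · have hq' : (q : ℚ) ≠ 0 := Int.cast_ne_zero.2 hq
    rw [cfEval, hval, inv_div]
    push_cast
    field_simp
    ring
termination_by q.natAbs

theorem stmt0_general (p q : ℤ)
    (hp : Odd p) (hqe : Even q) :
    ∃ l : List ℤ, Even l.length ∧ (∀ n ∈ l, Even n) ∧
      cfEval l = (p : ℚ) / (q : ℚ) := by
  obtain ⟨l, hlen, hl, hval⟩ := exists_even_cfEval_eq_div p q (hp.add_even hqe)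
  exact ⟨l, hlen.2 hqe, hl, hval⟩

theorem stmt0 (p q : ℤ) (hq : q ≠ 0) (hred : Int.gcd p q = 1)
    (hp : Odd p) (hqe : Even q) :
    ∃ l : List ℤ, Even l.length ∧ (∀ n ∈ l, Even n) ∧
      cfEval l = (p : ℚ) / (q : ℚ) :=
  stmt0_general p q hp hqe
end

section
/- Every rational number p/q in reduced form with p odd and q even has a unique expression as a continued fraction r = n_k - 1/(n_{k-1} - 1/(... - 1/n_1)) with k even, all n_i even integers, and n_1,...,n_{k-1} nonzero. -/
theorem Int.eq_of_even_of_abs_sub_lt_one {K : Type*} [CommRing K] [LinearOrder K]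
    [IsStrictOrderedRing K] {x : K} {m n : ℤ} (hm : Even m) (hn : Even n)
    (hxm : |x - m| < 1) (hxn : |x - n| < 1) : m = n := by
  have hK : |((m - n : ℤ) : K)| < 2 := by
    rw [Int.cast_sub, abs_lt] at *
    obtain ⟨hm₁, hm₂⟩ := hxm
    obtain ⟨hn₁, hn₂⟩ := hxn
    constructor <;> linarith
  have hZ : |m - n| < 2 := by exact_mod_cast hK
  obtain ⟨a, rfl⟩ := hm
  obtain ⟨b, rfl⟩ := hn
  rw [abs_lt] at hZ
  omega

theorem exists_even_abs_sub_lt_one {K : Type*} [Field K] [LinearOrder K] [IsStrictOrderedRing K]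
    [FloorRing K] (x : K) (hx : ∀ m : ℤ, Odd m → x ≠ m) : ∃ n : ℤ, Even n ∧ |x - n| < 1 := by
  set j := ⌊(x + 1) / 2⌋
  have hle := Int.floor_le ((x + 1) / 2)
  have hlt := Int.lt_floor_add_one ((x + 1) / 2)
  have hne : x ≠ ((2 * j - 1 : ℤ) : K) := hx _ ⟨j - 1, by ring⟩
  push_cast at hne
  refine ⟨2 * j, even_two_mul j, abs_sub_lt_iff.2 ⟨by push_cast; linarith, ?_⟩⟩
  push_cast
  refine lt_of_le_of_ne (by linarith) fun h => hne ?_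
  linarith

theorem Int.two_le_abs_of_even_of_ne_zero {n : ℤ} (hn : Even n) (h0 : n ≠ 0) : 2 ≤ |n| := by
  obtain ⟨k, rfl⟩ := hn
  rcases abs_cases (k + k) with ⟨h, _⟩ | ⟨h, _⟩ <;> omega

theorem one_lt_abs_cfEval_cons {n : ℤ} {t : List ℤ} (h : ∀ m ∈ n :: t, 2 ≤ |m|) :
    1 < |cfEval (n :: t)| := by
  induction t generalizing n with
  | nil =>
    have : (2 : ℚ) ≤ |(n : ℚ)| := by exact_mod_cast h n List.mem_cons_self
    simp only [cfEval, inv_zero, sub_zero]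
    linarith
  | cons m u ih =>
    have hn : (2 : ℚ) ≤ |(n : ℚ)| := by exact_mod_cast h n List.mem_cons_self
    have hinv : |(cfEval (m :: u))⁻¹| < 1 := by
      rw [abs_inv]
      exact inv_lt_one_of_one_lt₀ (ih fun k hk => h k (List.mem_cons_of_mem n hk))
    have := abs_sub_abs_le_abs_sub (n : ℚ) (cfEval (m :: u))⁻¹
    rw [cfEval]
    linarith

def IsEvenCF (l : List ℤ) : Prop :=
  (∀ n ∈ l, Even n) ∧ ∀ n ∈ l.tail, n ≠ 0

namespace IsEvenCF

variable {h : ℤ} {t : List ℤ}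

theorem tail (hl : IsEvenCF (h :: t)) : IsEvenCF t :=
  ⟨fun m hm => hl.1 m (List.mem_cons_of_mem h hm), fun m hm => hl.2 m (List.mem_of_mem_tail hm)⟩

theorem one_lt_abs_cfEval_tail (hl : IsEvenCF (h :: t)) (ht : t ≠ []) : 1 < |cfEval t| := by
  obtain ⟨m, u, rfl⟩ := List.exists_cons_of_ne_nil ht
  exact one_lt_abs_cfEval_cons fun k hk =>
    Int.two_le_abs_of_even_of_ne_zero (hl.1 k (List.mem_cons_of_mem h hk)) (hl.2 k hk)

theorem abs_cfEval_sub_head_lt_one (hl : IsEvenCF (h :: t)) : |cfEval (h :: t) - h| < 1 := by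
  rw [cfEval, sub_sub_cancel_left, abs_neg, abs_inv]
  rcases eq_or_ne t [] with rfl | ht
  · simp [cfEval]
  · exact inv_lt_one_of_one_lt₀ (hl.one_lt_abs_cfEval_tail ht)

theorem cfEval_ne_intCast (hl : IsEvenCF (h :: t)) (ht : t ≠ []) (m : ℤ) :
    cfEval (h :: t) ≠ m := by
  intro heq
  have hlt := hl.abs_cfEval_sub_head_lt_one
  rw [heq, ← Int.cast_sub, ← Int.cast_abs, ← Int.cast_one, Int.cast_lt, Int.abs_lt_one_iff,
    sub_eq_zero] at hlt
  subst hlt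
  have := hl.one_lt_abs_cfEval_tail ht
  simp only [cfEval, sub_eq_self, inv_eq_zero] at heq
  norm_num [heq] at this

theorem eq_nil_of_cfEval_eq_zero {l : List ℤ} (hl : IsEvenCF l) (hlen : Even l.length)
    (h0 : cfEval l = 0) : l = [] := by
  match l, hl with
  | [], _ => rfl
  | [h], _ => simp at hlen
  | h :: m :: u, hl =>
    exact absurd h0 (by exact_mod_cast hl.cfEval_ne_intCast (List.cons_ne_nil m u) 0)

theorem cons {n : ℤ} (hn : Even n) (ht : IsEvenCF t) (h1 : 1 < |cfEval t|) : IsEvenCF (n :: t) := by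
  refine ⟨List.forall_mem_cons.2 ⟨hn, ht.1⟩, ?_⟩
  match t, ht with
  | [], _ => simp
  | m :: u, ht =>
    refine List.forall_mem_cons.2 ⟨?_, ht.2⟩
    rintro rfl
    have := ht.abs_cfEval_sub_head_lt_one
    simp only [Int.cast_zero, sub_zero] at this
    linarith

theorem eq_of_cfEval_eq : ∀ {l₁ l₂ : List ℤ}, IsEvenCF l₁ → IsEvenCF l₂ →
    (Even l₁.length ↔ Even l₂.length) → cfEval l₁ = cfEval l₂ → l₁ = l₂
  | [], _, _, hl₂, hlen, heq => (hl₂.eq_nil_of_cfEval_eq_zero (hlen.1 ⟨0, rfl⟩) heq.symm).symm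
  | _, [], hl₁, _, hlen, heq => hl₁.eq_nil_of_cfEval_eq_zero (hlen.2 ⟨0, rfl⟩) heq
  | h₁ :: t₁, h₂ :: t₂, hl₁, hl₂, hlen, heq => by
    obtain rfl : h₁ = h₂ := Int.eq_of_even_of_abs_sub_lt_one (hl₁.1 h₁ List.mem_cons_self)
      (hl₂.1 h₂ List.mem_cons_self) hl₁.abs_cfEval_sub_head_lt_one
      (heq ▸ hl₂.abs_cfEval_sub_head_lt_one)
    have hlen' : Even t₁.length ↔ Even t₂.length := by
      simpa only [List.length_cons, Nat.even_add_one, not_iff_not] using hlen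
    rw [eq_of_cfEval_eq hl₁.tail hl₂.tail hlen' (by simpa [cfEval] using heq)]

end IsEvenCF

theorem exists_even_div_eq_sub_inv {a b : ℤ} (hb : b ≠ 0) (hdvd : ¬b ∣ a) :
    ∃ n : ℤ, Even n ∧ (n * b - a).natAbs < b.natAbs ∧
      1 < |(b : ℚ) / (n * b - a : ℤ)| ∧ (a : ℚ) / b = n - ((b : ℚ) / (n * b - a : ℤ))⁻¹ := by
  have hx : ∀ m : ℤ, (a / b : ℚ) ≠ m := by
    intro m hm
    rw [div_eq_iff (by exact_mod_cast hb)] at hm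
    exact hdvd ⟨m, by rw [mul_comm]; exact_mod_cast hm⟩
  obtain ⟨n, hn, hxn⟩ := exists_even_abs_sub_lt_one (a / b : ℚ) fun m _ => hx m
  have hnx : (n : ℚ) - a / b = (n * b - a : ℤ) / b := by
    push_cast
    field_simp
  have hnx0 : ((n * b - a : ℤ) / b : ℚ) ≠ 0 := hnx ▸ sub_ne_zero.2 (hx n).symm
  have hnx1 : |((n * b - a : ℤ) / b : ℚ)| < 1 := by rwa [← hnx, abs_sub_comm]
  refine ⟨n, hn, ?_, ?_, ?_⟩
  · rw [abs_div, div_lt_one (by positivity)] at hnx1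
    zify
    exact_mod_cast hnx1
  · rw [← inv_div, abs_inv]
    exact (one_lt_inv₀ (abs_pos.2 hnx0)).2 hnx1
  · rw [inv_div, ← hnx, sub_sub_cancel]

theorem exists_isEvenCF_cfEval_eq (a b : ℤ) (hab : Odd (a + b)) :
    ∃ l, IsEvenCF l ∧ (Even l.length ↔ Even b) ∧ cfEval l = a / b := by
  induction hd : b.natAbs using Nat.strong_induction_on generalizing a b with
  | _ d ih =>
  subst hd
  rcases eq_or_ne b 0 with rfl | hb
  · -- `[]` stands for `a / 0 = ∞`; both are `0` in `ℚ`
    exact ⟨[], ⟨by simp, by simp⟩, by simp, by simp [cfEval]⟩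
  by_cases hdvd : b ∣ a
  · obtain ⟨c, rfl⟩ := hdvd
    have hodd : Odd (b * (c + 1)) := by rwa [mul_add_one]
    rw [Int.odd_mul, odd_add_one] at hodd
    refine ⟨[c], ⟨by simpa using hodd.2, by simp⟩, by simpa using hodd.1, ?_⟩
    simp [cfEval, hb]
  · obtain ⟨n, hn, hkb, hs, hx⟩ := exists_even_div_eq_sub_inv hb hdvd
    have hbk : Odd (b + (n * b - a)) := by
      have : b + (n * b - a) = (a + b) + (n * b - 2 * a) := by ring
      exact this ▸ hab.add_even ((hn.mul_right b).sub (even_two_mul a))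
    obtain ⟨t, ht, htlen, hteval⟩ := ih _ hkb b _ hbk rfl
    refine ⟨n :: t, ht.cons hn (hteval ▸ hs), ?_, by rw [cfEval, hteval, hx]⟩
    rw [List.length_cons, Nat.even_add_one, htlen, Int.even_sub, Int.even_mul]
    rw [Int.odd_add, ← Int.not_even_iff_odd] at hab
    tauto

theorem stmt1_general (p q : ℤ)
    (hp : Odd p) (hqe : Even q) :
    ∃! l : List ℤ, Even l.length ∧ (∀ n ∈ l, Even n) ∧
      (∀ n ∈ l.tail, n ≠ 0) ∧ cfEval l = (p : ℚ) / (q : ℚ) := by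
  obtain ⟨l, hl, hlen, heval⟩ := exists_isEvenCF_cfEval_eq p q (hp.add_even hqe)
  refine ⟨l, ⟨hlen.2 hqe, hl.1, hl.2, heval⟩, ?_⟩
  rintro l' ⟨hlen', hev', hnz', heval'⟩
  exact IsEvenCF.eq_of_cfEval_eq ⟨hev', hnz'⟩ hl (iff_of_true hlen' (hlen.2 hqe))
    (heval'.trans heval.symm)

theorem stmt1 (p q : ℤ) (hq : q ≠ 0) (hred : Int.gcd p q = 1)
    (hp : Odd p) (hqe : Even q) :
    ∃! l : List ℤ, Even l.length ∧ (∀ n ∈ l, Even n) ∧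
      (∀ n ∈ l.tail, n ≠ 0) ∧ cfEval l = (p : ℚ) / (q : ℚ) :=
  stmt1_general p q hp hqe
end

section
/- With B_n = [[[n], i·u^{-n}], [i·u^n, 0]] as above, the identity B_n · B_0 · B_m = -B_{n+m} holds for all integers n, m. -/
open Matrix

/-- The balanced q-integer `[n] = (u^n - u^{-n})/(u - u⁻¹)`, where `w` is the
inverse of `u - u⁻¹`. -/
def qint {R : Type*} [CommRing R] (u : Rˣ) (w : R) (n : ℤ) : R :=
  (((u ^ n : Rˣ) : R) - ((u ^ (-n) : Rˣ) : R)) * w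

/-- The matrix `B_n = [[[n], i·u^{-n}], [i·u^n, 0]]`. -/
def Bmat {R : Type*} [CommRing R] (i : R) (u : Rˣ) (w : R) (n : ℤ) :
    Matrix (Fin 2) (Fin 2) R :=
  !![qint u w n, i * ((u ^ (-n) : Rˣ) : R); i * ((u ^ n : Rˣ) : R), 0]

theorem stmt7 {R : Type*} [CommRing R] (i : R) (hi : i ^ 2 = -1)
    (u : Rˣ) (w : R) (hw : ((u : R) - ((u⁻¹ : Rˣ) : R)) * w = 1) (n m : ℤ) :
    Bmat i u w n * Bmat i u w 0 * Bmat i u w m = -(Bmat i u w (n + m)) := by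
  have hmul : ∀ a b : ℤ, ((u ^ a : Rˣ) : R) * ((u ^ b : Rˣ) : R) = ((u ^ (a + b) : Rˣ) : R) := by
    intro a b; rw [← Units.val_mul, ← _root_.zpow_add]
  ext x y
  fin_cases x <;> fin_cases y <;>
    simp [Bmat, qint, Matrix.mul_apply, Fin.sum_univ_succ] <;>
    (try simp only [← _root_.zpow_neg])
  · linear_combination ((((u ^ (-n) : Rˣ) : R) * (((u ^ m : Rˣ) : R) - ((u ^ (-m) : Rˣ) : R))
        + (((u ^ n : Rˣ) : R) - ((u ^ (-n) : Rˣ) : R)) * ((u ^ m : Rˣ) : R)) * w) * hi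
      - w * hmul n m + w * hmul (-m) (-n)
  · linear_combination i * ((u ^ (-n) : Rˣ) : R) * ((u ^ (-m) : Rˣ) : R) * hi
      - i * hmul (-m) (-n)
  · linear_combination i * ((u ^ n : Rˣ) : R) * ((u ^ m : Rˣ) : R) * hi - i * hmul n m
end

section
/- Any finite product C of matrices B_{n_1}, ..., B_{n_r} has the form C = [[α, iβ], [iγ, δ]] with α, β, γ, δ ∈ ℤ[u, u⁻¹] satisfying αδ + βγ = 1. -/
open Matrix

/-!
The matrices `[[α, iβ], [iγ, δ]]` with `α, β, γ, δ ∈ ℤ[u, u⁻¹]` and `αδ + βγ = 1` form a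
monoid: since `i² = -1`, `αδ + βγ` is the determinant, and the product of two such matrices
again has real diagonal and imaginary off-diagonal entries. Each `B_n` lies in this monoid,
because `[n] ∈ ℤ[u, u⁻¹]` by the recursion `[n + 1] = u [n] + u^{-n}`.
-/

section

variable {R : Type*} [CommRing R]

def twistedSL2 (S : Subring R) (i : R) (hi : i ^ 2 = -1) :
    Submonoid (Matrix (Fin 2) (Fin 2) R) where
  carrier := {M | ∃ α β γ δ : R, α ∈ S ∧ β ∈ S ∧ γ ∈ S ∧ δ ∈ S ∧
    M = !![α, i * β; i * γ, δ] ∧ α * δ + β * γ = 1}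
  one_mem' := ⟨1, 0, 0, 1, S.one_mem, S.zero_mem, S.zero_mem, S.one_mem,
    by rw [one_fin_two]; simp, by ring⟩
  mul_mem' := by
    rintro _ _ ⟨α, β, γ, δ, hα, hβ, hγ, hδ, rfl, h⟩ ⟨α', β', γ', δ', hα', hβ', hγ', hδ', rfl, h'⟩
    refine ⟨α * α' - β * γ', α * β' + β * δ', γ * α' + δ * γ', δ * δ' - γ * β',
      S.sub_mem (S.mul_mem hα hα') (S.mul_mem hβ hγ'),
      S.add_mem (S.mul_mem hα hβ') (S.mul_mem hβ hδ'),
      S.add_mem (S.mul_mem hγ hα') (S.mul_mem hδ hγ'),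
      S.sub_mem (S.mul_mem hδ hδ') (S.mul_mem hγ hβ'), ?_, ?_⟩
    · rw [mul_fin_two]
      exact congrArg of <| vec2_eq
        (vec2_eq (by linear_combination β * γ' * hi) (by ring))
        (vec2_eq (by ring) (by linear_combination γ * β' * hi))
    · linear_combination (α' * δ' + β' * γ') * h + h'

variable (u : Rˣ)

theorem units_zpow_mem_closure (n : ℤ) :
    ((u ^ n : Rˣ) : R) ∈ Subring.closure {(u : R), ((u⁻¹ : Rˣ) : R)} := by
  obtain ⟨m, rfl | rfl⟩ := Int.eq_nat_or_neg n
  · rw [_root_.zpow_natCast, Units.val_pow_eq_pow_val]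
    exact pow_mem (Subring.subset_closure (by simp)) m
  · rw [_root_.zpow_neg, ← _root_.inv_zpow, _root_.zpow_natCast, Units.val_pow_eq_pow_val]
    exact pow_mem (Subring.subset_closure (by simp)) m

variable (w : R)

theorem qint_neg (n : ℤ) : qint u w (-n) = -qint u w n := by
  unfold qint
  rw [neg_neg]
  ring

theorem qint_add_one (hw : ((u : R) - ((u⁻¹ : Rˣ) : R)) * w = 1) (n : ℤ) :
    qint u w (n + 1) = u * qint u w n + ((u ^ (-n) : Rˣ) : R) := by
  have h_pos : ((u ^ (n + 1) : Rˣ) : R) = ((u ^ n : Rˣ) : R) * u := by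
    rw [_root_.zpow_add_one, Units.val_mul]
  have h_neg : ((u ^ (-(n + 1)) : Rˣ) : R) = ((u ^ (-n) : Rˣ) : R) * ((u⁻¹ : Rˣ) : R) := by
    rw [neg_add, _root_.zpow_add, _root_.zpow_neg_one, Units.val_mul]
  unfold qint
  rw [h_pos, h_neg]
  linear_combination ((u ^ (-n) : Rˣ) : R) * hw

theorem qint_mem_closure (hw : ((u : R) - ((u⁻¹ : Rˣ) : R)) * w = 1) (n : ℤ) :
    qint u w n ∈ Subring.closure {(u : R), ((u⁻¹ : Rˣ) : R)} := by
  have h_nat (m : ℕ) : qint u w m ∈ Subring.closure {(u : R), ((u⁻¹ : Rˣ) : R)} := by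
    induction m with
    | zero => simp [qint]
    | succ m ih =>
      rw [Nat.cast_succ, qint_add_one u w hw]
      exact add_mem (mul_mem (Subring.subset_closure (by simp)) ih)
        (units_zpow_mem_closure u _)
  obtain ⟨m, rfl | rfl⟩ := Int.eq_nat_or_neg n
  · exact h_nat m
  · rw [qint_neg]
    exact neg_mem (h_nat m)

theorem Bmat_mem_twistedSL2 (i : R) (hi : i ^ 2 = -1)
    (hw : ((u : R) - ((u⁻¹ : Rˣ) : R)) * w = 1) (n : ℤ) :
    Bmat i u w n ∈ twistedSL2 (Subring.closure {(u : R), ((u⁻¹ : Rˣ) : R)}) i hi :=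
  ⟨qint u w n, _, _, 0, qint_mem_closure u w hw n, units_zpow_mem_closure u (-n),
    units_zpow_mem_closure u n, zero_mem _, rfl, by simp⟩

end

theorem stmt10 {R : Type*} [CommRing R] (i : R) (hi : i ^ 2 = -1)
    (u : Rˣ) (w : R) (hw : ((u : R) - ((u⁻¹ : Rˣ) : R)) * w = 1)
    (l : List ℤ) :
    ∃ α β γ δ : R,
      α ∈ Subring.closure {(u : R), ((u⁻¹ : Rˣ) : R)} ∧
      β ∈ Subring.closure {(u : R), ((u⁻¹ : Rˣ) : R)} ∧
      γ ∈ Subring.closure {(u : R), ((u⁻¹ : Rˣ) : R)} ∧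
      δ ∈ Subring.closure {(u : R), ((u⁻¹ : Rˣ) : R)} ∧
      (l.map (Bmat i u w)).prod = !![α, i * β; i * γ, δ] ∧
      α * δ + β * γ = 1 :=
  Submonoid.list_prod_mem _ <| List.forall_mem_map.mpr fun n _ ↦
    Bmat_mem_twistedSL2 u w i hi hw n
end

section
/- For any finite product C = B_{n_1} ⋯ B_{n_k} and d = i(u⁻¹ - u), the scalar (1, d) · C · (1, 0)ᵀ is invariant under reversing the order of the factors: (1,d) B_{n_1}⋯B_{n_k} (1,0)ᵀ = (1,d) B_{n_k}⋯B_{n_1} (1,0)ᵀ. -/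
/-!
Let `G = [[1, d], [d, 1]]`, so that `(1, d) = G (1, 0)ᵀ`. Each factor satisfies
`B_nᵀ G = G B_n`: the only nontrivial entry is `[n] d + i u^n = i u^{-n}`, which is
`[n] (u - u⁻¹) = u^n - u^{-n}` multiplied by `-i`. Hence `G C = C'ᵀ G` for `C = B_{n_1} ⋯ B_{n_k}`
and its reversal `C'`, and since `G` is symmetric,
`(G e)ᵀ C e = eᵀ C'ᵀ G e = (G e)ᵀ C' e` with `e = (1, 0)ᵀ`.
-/

open Matrix

theorem SemiconjBy.list_prod_map {M ι : Type*} [Monoid M] {a : M} {f g : ι → M}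
    (h : ∀ x, SemiconjBy a (f x) (g x)) (l : List ι) :
    SemiconjBy a (l.map f).prod (l.map g).prod := by
  induction l with
  | nil => exact SemiconjBy.one_right a
  | cons x l ih => simpa only [List.map_cons, List.prod_cons] using (h x).mul_right ih

namespace Matrix

variable {n ι α : Type*} [Fintype n] [DecidableEq n] [CommSemiring α]

theorem mul_list_prod_map_eq_transpose_mul {G : Matrix n n α} {f : ι → Matrix n n α}
    (hf : ∀ x, (f x)ᵀ * G = G * f x) (l : List ι) :
    G * (l.map f).prod = ((l.reverse.map f).prod)ᵀ * G := by
  rw [transpose_list_prod, List.map_reverse, List.map_reverse, List.reverse_reverse, List.map_map]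
  exact SemiconjBy.list_prod_map (fun x => (hf x).symm) l

theorem mulVec_dotProduct_list_prod_map_reverse {G : Matrix n n α} (hG : Gᵀ = G)
    {f : ι → Matrix n n α} (hf : ∀ x, (f x)ᵀ * G = G * f x) (v : n → α) (l : List ι) :
    (G *ᵥ v) ⬝ᵥ ((l.map f).prod *ᵥ v) = (G *ᵥ v) ⬝ᵥ ((l.reverse.map f).prod *ᵥ v) :=
  calc (G *ᵥ v) ⬝ᵥ ((l.map f).prod *ᵥ v)
      = v ⬝ᵥ ((G * (l.map f).prod) *ᵥ v) := by
        rw [← vecMul_transpose, hG, ← dotProduct_mulVec, mulVec_mulVec]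
    _ = v ⬝ᵥ (((l.reverse.map f).prod)ᵀ *ᵥ (G *ᵥ v)) := by
        rw [mul_list_prod_map_eq_transpose_mul hf, mulVec_mulVec]
    _ = (G *ᵥ v) ⬝ᵥ ((l.reverse.map f).prod *ᵥ v) := by
        rw [mulVec_transpose, dotProduct_comm, ← dotProduct_mulVec]

end Matrix

section

variable {R : Type*} [CommRing R] {u : Rˣ} {w : R}

theorem qint_mul_sub_inv (hw : ((u : R) - ((u⁻¹ : Rˣ) : R)) * w = 1) (n : ℤ) :
    qint u w n * ((u : R) - ((u⁻¹ : Rˣ) : R)) = ((u ^ n : Rˣ) : R) - ((u ^ (-n) : Rˣ) : R) := by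
  rw [qint, mul_right_comm, mul_assoc, hw, mul_one]

theorem Bmat_transpose_mul (i : R) (hw : ((u : R) - ((u⁻¹ : Rˣ) : R)) * w = 1)
    {d : R} (hd : d = i * (((u⁻¹ : Rˣ) : R) - (u : R))) (n : ℤ) :
    (Bmat i u w n)ᵀ * !![1, d; d, 1] = !![1, d; d, 1] * Bmat i u w n := by
  have hq := qint_mul_sub_inv hw n
  rw [_root_.zpow_neg] at hq
  subst hd
  ext a b
  fin_cases a <;> fin_cases b <;>
    simp only [Bmat, _root_.zpow_neg, mul_apply, transpose_apply, of_apply, cons_val',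
      cons_val_zero, cons_val_one, cons_val_fin_one, Fin.sum_univ_two, Fin.zero_eta, Fin.mk_one,
      mul_one, one_mul, mul_zero, zero_mul, add_zero]
  · ring
  · linear_combination (-i) * hq
  · linear_combination i * hq
  · ring

end

theorem stmt11_general {R : Type*} [CommRing R] (i : R)
    (u : Rˣ) (w : R) (hw : ((u : R) - ((u⁻¹ : Rˣ) : R)) * w = 1)
    (d : R) (hd : d = i * (((u⁻¹ : Rˣ) : R) - (u : R))) (l : List ℤ) :
    dotProduct ![1, d] (((l.map (Bmat i u w)).prod).mulVec ![1, 0])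
      = dotProduct ![1, d]
          (((l.reverse.map (Bmat i u w)).prod).mulVec ![1, 0]) := by
  have hG_symm : !![1, d; d, 1]ᵀ = !![1, d; d, 1] := by
    ext a b; fin_cases a <;> fin_cases b <;> rfl
  have hG_col : !![1, d; d, 1] *ᵥ ![1, 0] = ![1, d] := by
    ext j; fin_cases j <;> simp
  rw [← hG_col]
  exact mulVec_dotProduct_list_prod_map_reverse hG_symm (Bmat_transpose_mul i hw hd) _ l

theorem stmt11 {R : Type*} [CommRing R] (i : R) (hi : i ^ 2 = -1)
    (u : Rˣ) (w : R) (hw : ((u : R) - ((u⁻¹ : Rˣ) : R)) * w = 1)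
    (d : R) (hd : d = i * (((u⁻¹ : Rˣ) : R) - (u : R))) (l : List ℤ) :
    dotProduct ![1, d] (((l.map (Bmat i u w)).prod).mulVec ![1, 0])
      = dotProduct ![1, d]
          (((l.reverse.map (Bmat i u w)).prod).mulVec ![1, 0]) :=
  stmt11_general i u w hw d hd l
end

section
/- For any finite product C = B_{n_1} ⋯ B_{n_k} and d = i(u⁻¹ - u), one has (1, d) C (1, -d)ᵀ = (1 - d²) · (1, 0) B_{n_k}⋯B_{n_1} (1, 0)ᵀ. -/
open Matrix

/-! Each `B_n` is self-adjoint for the symmetric bilinear form with Gram matrix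
`T = [[1, -d], [-d, 1]]`, i.e. `B_n T = T B_nᵀ`. Hence `C T = T (B_{n_k} ⋯ B_{n_1})ᵀ`, and
pairing with `(1, d)` and `(1, 0)` turns the left side into the claimed bilinear
expression because `T (1, 0)ᵀ = (1, -d)ᵀ` and `(1, d) T = (1 - d², 0)`. -/

theorem Matrix.list_prod_mul_eq_mul_transpose_prod_reverse {n α : Type*} [Fintype n]
    [DecidableEq n] [CommSemiring α] (T : Matrix n n α) (l : List (Matrix n n α))
    (h : ∀ A ∈ l, A * T = T * Aᵀ) : l.prod * T = T * l.reverse.prodᵀ := by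
  induction l with
  | nil => simp
  | cons A l ih =>
    rw [List.prod_cons, mul_assoc, ih fun B hB => h B (List.mem_cons_of_mem A hB),
      ← mul_assoc, h A List.mem_cons_self, List.reverse_cons, List.prod_append,
      List.prod_singleton, transpose_mul, mul_assoc]

section

variable {R : Type*} [CommRing R]

theorem inv_sub_mul_qint (u : Rˣ) {w : R} (hw : ((u : R) - ((u⁻¹ : Rˣ) : R)) * w = 1)
    (n : ℤ) :
    (((u⁻¹ : Rˣ) : R) - u) * qint u w n = ((u ^ (-n) : Rˣ) : R) - ((u ^ n : Rˣ) : R) := by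
  rw [qint]
  linear_combination (((u ^ (-n) : Rˣ) : R) - ((u ^ n : Rˣ) : R)) * hw

def twistForm (d : R) : Matrix (Fin 2) (Fin 2) R := !![1, -d; -d, 1]

theorem twistForm_mulVec_single (d : R) : twistForm d *ᵥ ![1, 0] = ![1, -d] := by
  ext a
  fin_cases a <;> simp [twistForm]

theorem vecMul_twistForm (d : R) : ![1, d] ᵥ* twistForm d = (1 - d ^ 2) • ![1, 0] := by
  ext a
  fin_cases a <;> simp [twistForm, vecMul, dotProduct, Fin.sum_univ_two, sq, sub_eq_add_neg]

theorem Bmat_mul_twistForm (i : R) (u : Rˣ) {w : R}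
    (hw : ((u : R) - ((u⁻¹ : Rˣ) : R)) * w = 1) (n : ℤ) :
    Bmat i u w n * twistForm (i * (((u⁻¹ : Rˣ) : R) - u))
      = twistForm (i * (((u⁻¹ : Rˣ) : R) - u)) * (Bmat i u w n)ᵀ := by
  have h := inv_sub_mul_qint u hw n
  have hT : (Bmat i u w n)ᵀ
      = !![qint u w n, i * ((u ^ n : Rˣ) : R); i * ((u ^ (-n) : Rˣ) : R), 0] :=
    (transposeᵣ_eq _).symm
  rw [hT, Bmat, twistForm, mul_fin_two, mul_fin_two]
  refine congrArg of (vec2_eq (vec2_eq ?_ ?_) (vec2_eq ?_ ?_))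
  · ring
  · linear_combination -i * h
  · linear_combination i * h
  · ring

end

theorem stmt12_general {R : Type*} [CommRing R] (i : R)
    (u : Rˣ) (w : R) (hw : ((u : R) - ((u⁻¹ : Rˣ) : R)) * w = 1)
    (d : R) (hd : d = i * (((u⁻¹ : Rˣ) : R) - (u : R))) (l : List ℤ) :
    dotProduct ![1, d] (((l.map (Bmat i u w)).prod).mulVec ![1, -d])
      = (1 - d ^ 2) *
        dotProduct ![1, 0]
          (((l.reverse.map (Bmat i u w)).prod).mulVec ![1, 0]) := by
  have hPQ := list_prod_mul_eq_mul_transpose_prod_reverse (twistForm d) (l.map (Bmat i u w))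
    (by simpa only [List.forall_mem_map, hd] using fun n _ => Bmat_mul_twistForm i u hw n)
  rw [← List.map_reverse] at hPQ
  set P := (l.map (Bmat i u w)).prod
  set Q := (l.reverse.map (Bmat i u w)).prod
  calc ![1, d] ⬝ᵥ (P *ᵥ ![1, -d])
      = ![1, d] ⬝ᵥ ((P * twistForm d) *ᵥ ![1, 0]) := by
        rw [← mulVec_mulVec, twistForm_mulVec_single]
    _ = (![1, d] ᵥ* twistForm d) ⬝ᵥ (Qᵀ *ᵥ ![1, 0]) := by
        rw [hPQ, ← mulVec_mulVec, dotProduct_mulVec]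
    _ = (1 - d ^ 2) * (![1, 0] ⬝ᵥ (Qᵀ *ᵥ ![1, 0])) := by
        rw [vecMul_twistForm, smul_dotProduct, smul_eq_mul]
    _ = (1 - d ^ 2) * (![1, 0] ⬝ᵥ (Q *ᵥ ![1, 0])) := by
        rw [dotProduct_mulVec, vecMul_transpose, dotProduct_comm]

theorem stmt12 {R : Type*} [CommRing R] (i : R) (hi : i ^ 2 = -1)
    (u : Rˣ) (w : R) (hw : ((u : R) - ((u⁻¹ : Rˣ) : R)) * w = 1)
    (d : R) (hd : d = i * (((u⁻¹ : Rˣ) : R) - (u : R))) (l : List ℤ) :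
    dotProduct ![1, d] (((l.map (Bmat i u w)).prod).mulVec ![1, -d])
      = (1 - d ^ 2) *
        dotProduct ![1, 0]
          (((l.reverse.map (Bmat i u w)).prod).mulVec ![1, 0]) :=
  stmt12_general i u w hw d hd l
end

section
/- For any finite product C of B_n matrices, applying the substitution u ↦ u⁻¹ to the scalar (1,d) C (1,0)ᵀ yields (1,0) C (1,-d)ᵀ, where d = i(u⁻¹ - u). -/
/-
Write `τ` for the substitution `u ↦ u⁻¹`. It fixes `[n]` and swaps `u^n` with `u^{-n}`, so
`τ B_n = B_nᵀ`; hence `τ C` is the transpose of the reversed product `C'`. On the other side,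
with `M = [[1, -d], [-d, 1]]` one checks `B_n M = M B_nᵀ`, and it propagates to
`C M = M C'ᵀ`. Since `(1, -d)ᵀ` is the first column (and row) of `M`, both sides of the
identity equal `(1, 0) C M (1, 0)ᵀ`.
-/

open Matrix

theorem Matrix.list_prod_mul_eq_mul_transpose_reverse_prod {m α : Type*} [Fintype m]
    [DecidableEq m] [CommSemiring α] (M : Matrix m m α) :
    ∀ l : List (Matrix m m α), (∀ A ∈ l, A * M = M * Aᵀ) →
      l.prod * M = M * l.reverse.prodᵀ
  | [], _ => by simp
  | A :: l, hl => by
    rw [List.prod_cons, List.reverse_cons, List.prod_append, List.prod_singleton,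
      transpose_mul, ← mul_assoc, ← hl A List.mem_cons_self, mul_assoc, mul_assoc,
      list_prod_mul_eq_mul_transpose_reverse_prod M l fun B hB => hl B (List.mem_cons_of_mem A hB)]

namespace RingHom

variable {R : Type*}

theorem map_units_zpow_of_map_eq_inv [Ring R] (τ : R →+* R) {u : Rˣ} (hτu : τ u = ↑u⁻¹)
    (n : ℤ) : τ ↑(u ^ n) = ↑(u ^ (-n)) := by
  have hmap : Units.map (τ : R →* R) u = u⁻¹ := Units.ext hτu
  change ((Units.map (τ : R →* R) (u ^ n) : Rˣ) : R) = _
  rw [map_zpow, hmap, _root_.inv_zpow']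

theorem map_units_inv_of_map_eq_inv [Ring R] (τ : R →+* R) {u : Rˣ} (hτu : τ u = ↑u⁻¹) :
    τ ↑u⁻¹ = u := by
  simpa using τ.map_units_zpow_of_map_eq_inv hτu (-1)

theorem map_eq_neg_of_mul_eq_one [CommRing R] (τ : R →+* R) {a w : R} (haw : a * w = 1)
    (hτa : τ a = -a) : τ w = -w := by
  have hτaw : -a * τ w = 1 := by rw [← hτa, ← map_mul, haw, map_one]
  linear_combination (-τ w) * haw + (-w) * hτaw

theorem map_matrix_list_prod {S m : Type*} [Fintype m] [DecidableEq m] [Semiring R]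
    [Semiring S] (τ : R →+* S) {ι : Type*} (f : ι → Matrix m m R) (l : List ι) :
    (l.map f).prod.map τ = (l.map fun n => (f n).map τ).prod := by
  rw [← τ.mapMatrix_apply, map_list_prod, List.map_map, Function.comp_def]
  rfl

end RingHom

section Bmat

variable {R : Type*} [CommRing R] {i : R} {u : Rˣ} {w : R}

theorem Bmat_map_eq_transpose {τ : R →+* R} (hw : ((u : R) - ((u⁻¹ : Rˣ) : R)) * w = 1)
    (hτi : τ i = i) (hτu : τ (u : R) = ((u⁻¹ : Rˣ) : R)) (n : ℤ) :
    (Bmat i u w n).map τ = (Bmat i u w n)ᵀ := by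
  have hτpow := τ.map_units_zpow_of_map_eq_inv hτu
  have hτw : τ w = -w := τ.map_eq_neg_of_mul_eq_one hw <| by
    rw [map_sub, hτu, τ.map_units_inv_of_map_eq_inv hτu, neg_sub]
  ext a b
  fin_cases a <;> fin_cases b <;>
    simp only [Bmat, qint, map_apply, transpose_apply, of_apply, cons_val', cons_val_zero,
      cons_val_one, cons_val_fin_one, Fin.isValue, Fin.zero_eta, Fin.mk_one, map_mul, map_sub,
      map_zero, hτi, hτpow, hτw, neg_neg]
  all_goals ring

theorem Bmat_list_prod_map_eq_transpose {τ : R →+* R}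
    (hw : ((u : R) - ((u⁻¹ : Rˣ) : R)) * w = 1) (hτi : τ i = i)
    (hτu : τ (u : R) = ((u⁻¹ : Rˣ) : R)) (l : List ℤ) :
    (l.map (Bmat i u w)).prod.map τ = (l.reverse.map (Bmat i u w)).prodᵀ := by
  simp only [τ.map_matrix_list_prod, Bmat_map_eq_transpose hw hτi hτu, transpose_list_prod,
    List.map_reverse, List.reverse_reverse, List.map_map, Function.comp_def]

theorem Bmat_mul_eq_mul_transpose {d : R} (hw : ((u : R) - ((u⁻¹ : Rˣ) : R)) * w = 1)
    (hd : d = i * (((u⁻¹ : Rˣ) : R) - (u : R))) (n : ℤ) :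
    Bmat i u w n * !![1, -d; -d, 1] = !![1, -d; -d, 1] * (Bmat i u w n)ᵀ := by
  ext a b
  fin_cases a <;> fin_cases b <;>
    simp only [Bmat, qint, mul_apply, Fin.sum_univ_two, transpose_apply, of_apply, cons_val',
      cons_val_zero, cons_val_one, cons_val_fin_one, Fin.isValue, Fin.zero_eta, Fin.mk_one]
  · ring
  -- off the diagonal, everything reduces to `d [n] = i (u^{-n} - u^n)`
  · linear_combination (-(((u ^ n : Rˣ) : R) - ((u ^ (-n) : Rˣ) : R)) * w) * hd
      + i * (((u ^ n : Rˣ) : R) - ((u ^ (-n) : Rˣ) : R)) * hw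
  · linear_combination (((u ^ n : Rˣ) : R) - ((u ^ (-n) : Rˣ) : R)) * w * hd
      - i * (((u ^ n : Rˣ) : R) - ((u ^ (-n) : Rˣ) : R)) * hw
  · ring

theorem Bmat_list_prod_mul_eq_mul_transpose {d : R}
    (hw : ((u : R) - ((u⁻¹ : Rˣ) : R)) * w = 1) (hd : d = i * (((u⁻¹ : Rˣ) : R) - (u : R)))
    (l : List ℤ) :
    (l.map (Bmat i u w)).prod * !![1, -d; -d, 1]
      = !![1, -d; -d, 1] * (l.reverse.map (Bmat i u w)).prodᵀ := by
  rw [list_prod_mul_eq_mul_transpose_reverse_prod _ _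
    (by simp [Bmat_mul_eq_mul_transpose hw hd]), List.map_reverse]

end Bmat

theorem stmt13_general {R : Type*} [CommRing R] (i : R)
    (u : Rˣ) (w : R) (hw : ((u : R) - ((u⁻¹ : Rˣ) : R)) * w = 1)
    (d : R) (hd : d = i * (((u⁻¹ : Rˣ) : R) - (u : R)))
    (τ : R →+* R) (hτi : τ i = i) (hτu : τ (u : R) = ((u⁻¹ : Rˣ) : R))
    (l : List ℤ) :
    τ (dotProduct ![1, d] (((l.map (Bmat i u w)).prod).mulVec ![1, 0]))
      = dotProduct ![1, 0]
          (((l.map (Bmat i u w)).prod).mulVec ![1, -d]) := by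
  set C := (l.map (Bmat i u w)).prod
  set D := (l.reverse.map (Bmat i u w)).prod
  set M : Matrix (Fin 2) (Fin 2) R := !![1, -d; -d, 1]
  have hτd : τ d = -d := by
    rw [hd, map_mul, map_sub, hτi, hτu, τ.map_units_inv_of_map_eq_inv hτu]
    ring
  have hτ_row : τ ∘ ![1, d] = ![1, -d] := by ext j; fin_cases j <;> simp [hτd]
  have hτ_e : τ ∘ ![1, 0] = ![1, 0] := by ext j; fin_cases j <;> simp
  have hM_row : ![1, -d] = ![1, 0] ᵥ* M := by ext j; fin_cases j <;> simp [M]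
  have hM_col : ![1, -d] = M *ᵥ ![1, 0] := by ext j; fin_cases j <;> simp [M]
  calc τ (![1, d] ⬝ᵥ (C *ᵥ ![1, 0])) = ![1, -d] ⬝ᵥ (Dᵀ *ᵥ ![1, 0]) := by
        rw [τ.map_dotProduct, show τ ∘ (C *ᵥ ![1, 0]) = C.map τ *ᵥ (τ ∘ ![1, 0]) from
          funext (τ.map_mulVec C _), Bmat_list_prod_map_eq_transpose hw hτi hτu, hτ_row, hτ_e]
    _ = ![1, 0] ⬝ᵥ ((M * Dᵀ) *ᵥ ![1, 0]) := by
        rw [hM_row, ← dotProduct_mulVec, mulVec_mulVec]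
    _ = ![1, 0] ⬝ᵥ ((C * M) *ᵥ ![1, 0]) := by
        rw [Bmat_list_prod_mul_eq_mul_transpose hw hd]
    _ = ![1, 0] ⬝ᵥ (C *ᵥ ![1, -d]) := by
        rw [← mulVec_mulVec, ← hM_col]

theorem stmt13 {R : Type*} [CommRing R] (i : R) (hi : i ^ 2 = -1)
    (u : Rˣ) (w : R) (hw : ((u : R) - ((u⁻¹ : Rˣ) : R)) * w = 1)
    (d : R) (hd : d = i * (((u⁻¹ : Rˣ) : R) - (u : R)))
    (τ : R →+* R) (hτi : τ i = i) (hτu : τ (u : R) = ((u⁻¹ : Rˣ) : R))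
    (l : List ℤ) :
    τ (dotProduct ![1, d] (((l.map (Bmat i u w)).prod).mulVec ![1, 0]))
      = dotProduct ![1, 0]
          (((l.map (Bmat i u w)).prod).mulVec ![1, -d]) :=
  stmt13_general i u w hw d hd τ hτi hτu l
end

section
/- If K and K' are knots whose Jones polynomials satisfy V_{K'}(t) = ± t^n · V_K(t) for some integer n, then V_K = V_{K'} identically. In algebraic form: if f, g ∈ ℤ[t, t⁻¹] satisfy f(1) = g(1) = 1, both f - 1 and g - 1 are divisible by (t-1)(t³-1), and g = ± t^n f, then f = g. -/
/-!
Substitute `t ↦ 1 + ε` in the dual numbers `ℤ[ε]`. The factor `(t - 1)(t³ - 1)` becomes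
`3ε² = 0`, so `f` and `g` both map to `1`, while `tⁿ` maps to `1 + nε`. Hence `g = ± tⁿ f`
becomes `1 = ±(1 + nε)`, which forces the sign `+` and `n = 0`.
-/

open LaurentPolynomial DualNumber TrivSqZeroExt

variable {R : Type*} [CommRing R]

variable (R) in
def DualNumber.onePlusEps : R[ε]ˣ where
  val := 1 + ε
  inv := 1 - ε
  val_inv := by rw [← mul_self_sub_mul_self, one_mul, eps_mul_eps, sub_zero]
  inv_val := by rw [mul_comm, ← mul_self_sub_mul_self, one_mul, eps_mul_eps, sub_zero]

theorem DualNumber.val_onePlusEps_zpow (n : ℤ) :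
    ((onePlusEps R ^ n : R[ε]ˣ) : R[ε]) = 1 + (n : R) • ε := by
  induction n using Int.induction_on with
  | zero => simp
  | succ k ih =>
    rw [zpow_add_one, Units.val_mul, ih]
    ext
    · simp [onePlusEps]
    · simp [onePlusEps]; ring
  | pred k ih =>
    rw [zpow_sub_one, Units.val_mul, ih]
    ext
    · simp [onePlusEps]
    · simp [onePlusEps]; ring

namespace LaurentPolynomial

variable (R) in
noncomputable def evalOnePlusEps : R[T;T⁻¹] →+* R[ε] :=
  eval₂ (inlHom R R) (onePlusEps R)

theorem evalOnePlusEps_T (n : ℤ) : evalOnePlusEps R (T n) = 1 + (n : R) • ε := by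
  rw [evalOnePlusEps, eval₂_T, val_onePlusEps_zpow]

theorem evalOnePlusEps_T_sub_one_mul_T_sub_one (m k : ℤ) :
    evalOnePlusEps R ((T m - 1) * (T k - 1)) = 0 := by
  simp only [map_mul, map_sub, map_one, evalOnePlusEps_T, add_sub_cancel_left, smul_mul_smul,
    eps_mul_eps, smul_zero]

theorem evalOnePlusEps_eq_one_of_dvd {f : R[T;T⁻¹]} {m k : ℤ}
    (hf : (T m - 1) * (T k - 1) ∣ f - 1) : evalOnePlusEps R f = 1 := by
  obtain ⟨q, hq⟩ := hf
  have := congrArg (evalOnePlusEps R) hq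
  rwa [map_mul, evalOnePlusEps_T_sub_one_mul_T_sub_one, zero_mul, map_sub, map_one,
    sub_eq_zero] at this

end LaurentPolynomial

theorem stmt15_general (f g : LaurentPolynomial ℤ) (n : ℤ)
    (hf : (T 1 - 1) * ((T 3 : LaurentPolynomial ℤ) - 1) ∣ f - 1)
    (hg : (T 1 - 1) * ((T 3 : LaurentPolynomial ℤ) - 1) ∣ g - 1)
    (h : g = T n * f ∨ g = -(T n * f)) :
    f = g := by
  have hfε := evalOnePlusEps_eq_one_of_dvd hf
  have hgε := evalOnePlusEps_eq_one_of_dvd hg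
  rcases h with rfl | rfl
  · rw [map_mul, hfε, mul_one, evalOnePlusEps_T] at hgε
    have hn : n = 0 := by simpa using congrArg snd hgε
    rw [hn, T_zero, one_mul]
  · rw [map_neg, map_mul, hfε, mul_one, evalOnePlusEps_T] at hgε
    simpa using congrArg fst hgε

theorem stmt15 (f g : LaurentPolynomial ℤ) (n : ℤ)
    (hf1 : f.coeff.sum (fun _ a => a) = 1) (hg1 : g.coeff.sum (fun _ a => a) = 1)
    (hf : (T 1 - 1) * ((T 3 : LaurentPolynomial ℤ) - 1) ∣ f - 1)
    (hg : (T 1 - 1) * ((T 3 : LaurentPolynomial ℤ) - 1) ∣ g - 1)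
    (h : g = T n * f ∨ g = -(T n * f)) :
    f = g :=
  stmt15_general f g n hf hg h
end

section
/- For any matrix C in the group B generated by the matrices B_n, and any integer n, the pair (C, C·B_n·C) is a pivoting pair; that is, writing α₁, α₂ for the (1,1) entries of C and C·B_n·C respectively and ' for the substitution u ↦ u⁻¹, one has α₁'·α₂ = α₁·α₂'. -/
open Matrix

/-- For any `C` in the group generated by the matrices `Bₙ` (i.e. any product of
`Bₙ`'s) the pair `(C, C·Bₙ·C)` is a pivoting pair: `α₁'·α₂ = α₁·α₂'` where
`α₁, α₂` are the `(1,1)` entries and `'` is the substitution `u ↦ u⁻¹`. -/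
theorem stmt19 {R : Type*} [CommRing R] (i : R) (hi : i ^ 2 = -1)
    (u : Rˣ) (w : R) (hw : ((u : R) - ((u⁻¹ : Rˣ) : R)) * w = 1)
    (τ : R →+* R) (hτi : τ i = i) (hτu : τ (u : R) = ((u⁻¹ : Rˣ) : R))
    (C : Matrix (Fin 2) (Fin 2) R)
    (hC : ∃ l : List ℤ, C = (l.map (Bmat i u w)).prod) (n : ℤ) :
    τ (C 0 0) * ((C * Bmat i u w n * C) 0 0)
      = C 0 0 * τ ((C * Bmat i u w n * C) 0 0) := by
  obtain ⟨l, rfl⟩ := hC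
  -- basic facts about τ
  have huv : (u : R) * ((u⁻¹ : Rˣ) : R) = 1 := u.mul_inv
  have hτu' : τ ((u⁻¹ : Rˣ) : R) = (u : R) := by
    have h := congrArg τ huv
    rw [_root_.map_mul, _root_.map_one, hτu] at h
    calc τ ((u⁻¹ : Rˣ) : R) = ((u : R) * ((u⁻¹ : Rˣ) : R)) * τ ((u⁻¹ : Rˣ) : R) := by
          rw [huv, one_mul]
      _ = (u : R) * (((u⁻¹ : Rˣ) : R) * τ ((u⁻¹ : Rˣ) : R)) := by ring
      _ = (u : R) := by rw [h, mul_one]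
  have hv : ∀ k : ℤ, τ ((u ^ k : Rˣ) : R) = ((u ^ (-k) : Rˣ) : R) := by
    intro k
    have hu1 : Units.map (τ : R →* R) u = u⁻¹ := by
      ext; simpa using hτu
    have h2 : Units.map (τ : R →* R) (u ^ k) = u ^ (-k) := by
      rw [MonoidHom.map_zpow, hu1]; group
    have h3 := congrArg (Units.val) h2
    rw [Units.coe_map] at h3
    exact h3
  have hτw : τ w = -w := by
    have h := congrArg τ hw
    rw [_root_.map_mul, _root_.map_sub, _root_.map_one, hτu, hτu'] at h
    calc τ w = (((u : R) - ((u⁻¹ : Rˣ) : R)) * w) * τ w := by rw [hw, one_mul]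
      _ = -(((((u⁻¹ : Rˣ) : R)) - (u : R)) * τ w * w) := by ring
      _ = -w := by rw [h, one_mul]
  -- the four invariants, by induction on the word
  have key : ∀ m : List ℤ,
      ((((m.map (Bmat i u w)).prod) 0 0 - τ (((m.map (Bmat i u w)).prod) 0 0))
        + i * ((u : R) - ((u⁻¹ : Rˣ) : R)) *
          (((m.map (Bmat i u w)).prod) 0 1 - τ (((m.map (Bmat i u w)).prod) 1 0)) = 0)
      ∧ ((((m.map (Bmat i u w)).prod) 0 0 - τ (((m.map (Bmat i u w)).prod) 0 0))
        - i * ((u : R) - ((u⁻¹ : Rˣ) : R)) *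
          (((m.map (Bmat i u w)).prod) 1 0 - τ (((m.map (Bmat i u w)).prod) 0 1)) = 0)
      ∧ (i * (((m.map (Bmat i u w)).prod) 1 0 - τ (((m.map (Bmat i u w)).prod) 1 0))
        - ((u : R) - ((u⁻¹ : Rˣ) : R)) *
          (((m.map (Bmat i u w)).prod) 1 1 - τ (((m.map (Bmat i u w)).prod) 0 0)) = 0)
      ∧ (i * (((m.map (Bmat i u w)).prod) 1 0 - τ (((m.map (Bmat i u w)).prod) 1 0))
        + ((u : R) - ((u⁻¹ : Rˣ) : R)) *
          (((m.map (Bmat i u w)).prod) 0 0 - τ (((m.map (Bmat i u w)).prod) 1 1)) = 0) := by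
    intro m
    induction m with
    | nil =>
      simp [Matrix.one_apply]
    | cons k t ih =>
      obtain ⟨hI1, hI2, hI3, hI4⟩ := ih
      set M := ((t.map (Bmat i u w)).prod) with hM
      set a := M 0 0; set b := M 0 1; set g := M 1 0; set d := M 1 1
      set vm : R := ((u ^ k : Rˣ) : R) with hvm
      set vmp : R := ((u ^ (-k) : Rˣ) : R) with hvmp
      have hq : qint u w k = (vm - vmp) * w := rfl
      have e00 : ((Bmat i u w k :: t.map (Bmat i u w)).prod) 0 0
          = (vm - vmp) * w * a + i * vmp * g := by
        rw [List.prod_cons]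
        simp only [Bmat, Matrix.mul_apply, Fin.sum_univ_two, Matrix.cons_val', Matrix.cons_val_zero,
          Matrix.cons_val_one, Matrix.head_cons, Matrix.empty_val', Matrix.cons_val_fin_one,
          Matrix.head_fin_const, Matrix.of_apply, qint]
        try ring
      have e01 : ((Bmat i u w k :: t.map (Bmat i u w)).prod) 0 1
          = (vm - vmp) * w * b + i * vmp * d := by
        rw [List.prod_cons]
        simp only [Bmat, Matrix.mul_apply, Fin.sum_univ_two, Matrix.cons_val', Matrix.cons_val_zero,
          Matrix.cons_val_one, Matrix.head_cons, Matrix.empty_val', Matrix.cons_val_fin_one,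
          Matrix.head_fin_const, Matrix.of_apply, qint]
        try ring
      have e10 : ((Bmat i u w k :: t.map (Bmat i u w)).prod) 1 0 = i * vm * a := by
        rw [List.prod_cons]
        simp only [Bmat, Matrix.mul_apply, Fin.sum_univ_two, Matrix.cons_val', Matrix.cons_val_zero,
          Matrix.cons_val_one, Matrix.head_cons, Matrix.empty_val', Matrix.cons_val_fin_one,
          Matrix.head_fin_const, Matrix.of_apply, qint]
        try ring
      have e11 : ((Bmat i u w k :: t.map (Bmat i u w)).prod) 1 1 = i * vm * b := by
        rw [List.prod_cons]
        simp only [Bmat, Matrix.mul_apply, Fin.sum_univ_two, Matrix.cons_val', Matrix.cons_val_zero,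
          Matrix.cons_val_one, Matrix.head_cons, Matrix.empty_val', Matrix.cons_val_fin_one,
          Matrix.head_fin_const, Matrix.of_apply, qint]
        try ring
      have hvk : τ vm = vmp := by rw [hvm, hvmp]; exact hv k
      have hvk' : τ vmp = vm := by
        rw [hvmp, hvm, hv (-k), neg_neg]
      have hτ00 : τ (((Bmat i u w k :: t.map (Bmat i u w)).prod) 0 0)
          = (vm - vmp) * w * τ a + i * vm * τ g := by
        rw [e00]; push_cast [_root_.map_add, _root_.map_mul, _root_.map_sub, hτi, hτw, hvk, hvk']; ring
      have hτ01 : τ (((Bmat i u w k :: t.map (Bmat i u w)).prod) 0 1)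
          = (vm - vmp) * w * τ b + i * vm * τ d := by
        rw [e01]; push_cast [_root_.map_add, _root_.map_mul, _root_.map_sub, hτi, hτw, hvk, hvk']; ring
      have hτ10 : τ (((Bmat i u w k :: t.map (Bmat i u w)).prod) 1 0) = i * vmp * τ a := by
        rw [e10]; push_cast [_root_.map_mul, hτi, hvk]; ring
      have hτ11 : τ (((Bmat i u w k :: t.map (Bmat i u w)).prod) 1 1) = i * vmp * τ b := by
        rw [e11]; push_cast [_root_.map_mul, hτi, hvk]; ring
      simp only [List.map_cons] at *
      rw [hτ00, hτ01, hτ10, hτ11, e00, e01, e10, e11]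
      refine ⟨?_, ?_, ?_, ?_⟩
      · linear_combination ((vm - vmp) * w) * hI1 + vmp * hI3
          + (((u : R) - ((u⁻¹ : Rˣ) : R)) * vmp * d
              - ((u : R) - ((u⁻¹ : Rˣ) : R)) * vmp * τ a) * hi
          + (i * τ g * (vm - vmp)) * hw
      · linear_combination ((vm - vmp) * w) * hI2 + vm * hI4
          + (((u : R) - ((u⁻¹ : Rˣ) : R)) * vm * τ d
              - ((u : R) - ((u⁻¹ : Rˣ) : R)) * vm * a) * hi
          + (i * g * (vm - vmp)) * hw
      · linear_combination (-vm) * hI1 + (vm * a - vmp * τ a) * hi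
          + (τ a * (vm - vmp)) * hw
      · linear_combination (-vmp) * hI2 + (vm * a - vmp * τ a) * hi
          + (a * (vm - vmp)) * hw
  -- finish
  obtain ⟨hI1, hI2, hI3, hI4⟩ := key l
  set M := ((l.map (Bmat i u w)).prod) with hMdef
  set a := M 0 0; set b := M 0 1; set g := M 1 0; set d := M 1 1
  set vn : R := ((u ^ n : Rˣ) : R) with hvn
  set vnp : R := ((u ^ (-n) : Rˣ) : R) with hvnp
  have hq : qint u w n = (vn - vnp) * w := rfl
  have hM00 : (M * Bmat i u w n * M) 0 0
      = a * ((vn - vnp) * w * a + i * vn * b + i * vnp * g) := by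
    simp only [Bmat, Matrix.mul_apply, Fin.sum_univ_two, Matrix.cons_val', Matrix.cons_val_zero,
      Matrix.cons_val_one, Matrix.head_cons, Matrix.empty_val', Matrix.cons_val_fin_one,
      Matrix.head_fin_const, Matrix.of_apply, qint]
    try ring
  have hvk : τ vn = vnp := by rw [hvn, hvnp]; exact hv n
  have hvk' : τ vnp = vn := by rw [hvnp, hvn, hv (-n), neg_neg]
  have hτM00 : τ ((M * Bmat i u w n * M) 0 0)
      = τ a * ((vn - vnp) * w * τ a + i * vnp * τ b + i * vn * τ g) := by
    rw [hM00]; push_cast [_root_.map_add, _root_.map_mul, _root_.map_sub, hτi, hτw, hvk, hvk']; ring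
  rw [hτM00, hM00]
  linear_combination (τ a * a * vn * w) * hI1 - (τ a * a * vnp * w) * hI2
    + (-(τ a * a * i * (vn * (b - τ g) + vnp * (g - τ b)))
        - τ a * a * (a - τ a) * ((vn - vnp) * w) * 0) * hw
end
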